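/- For binary strings: the sets sub_n(αᾱ), where α ranges over all co-necklaces of length n and ᾱ is the bitwise complement of α, are pairwise disjoint and their union equals {0,1}^n; i.e., {sub_n(β) : β an extended co-necklace of length 2n} partitions {0,1}^n. -/
import Mathlib


/-- A binary necklace: lexicographically least among all its cyclic rotations. -/
def IsNecklace (w : List Bool) : Prop := ∀ r : ℕ, w ≤ w.rotate r

/-- α is a co-necklace if α followed by its bitwise complement is a necklace. -/
def IsCoNecklace (α : List Bool) : Prop := IsNecklace (α ++ α.map (fun b => !b))

/-- ext_n(w) = w^t for the smallest t with t·|w| ≥ n. -/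
def ext {A : Type*} (n : ℕ) (w : List A) : List A :=
  (List.replicate ((n + w.length - 1) / w.length) w).flatten

/-- The set of all length-n substrings of w viewed as a cyclic string. -/
def subN {A : Type*} (n : ℕ) (w : List A) : Set (List A) :=
  {s | ∃ i < w.length, (ext n (w.rotate i)).take n = s}

namespace CoNeck

def tau : List Bool → List Bool
  | [] => []
  | a :: t => t ++ [!a]

def DD (s : List Bool) : List Bool := s ++ s.map (fun b => !b)

lemma length_DD (s : List Bool) : (DD s).length = 2 * s.length := by
  simp [DD]; ring

lemma length_tau (s : List Bool) : (tau s).length = s.length := by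
  cases s <;> simp [tau]

lemma length_tau_iter (i : ℕ) (s : List Bool) : (tau^[i] s).length = s.length := by
  induction i with
  | zero => rfl
  | succ i ih => rw [Function.iterate_succ_apply', length_tau, ih]

lemma DD_rotate_one (a : Bool) (t : List Bool) :
    (DD (a :: t)).rotate 1 = DD (tau (a :: t)) := by
  show ((a :: t) ++ _).rotate 1 = _
  rw [List.cons_append, List.rotate_cons_succ, List.rotate_zero]
  simp [DD, tau, List.map_append]

lemma DD_rotate (u : List Bool) (hu : u ≠ []) (i : ℕ) :
    (DD u).rotate i = DD (tau^[i] u) := by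
  induction i with
  | zero => simp
  | succ i ih =>
    have hne : tau^[i] u ≠ [] := by
      intro h
      have := length_tau_iter i u
      rw [h] at this
      exact hu (List.length_eq_zero_iff.mp this.symm)
    obtain ⟨a, t, hat⟩ := List.exists_cons_of_ne_nil hne
    rw [← List.rotate_rotate, ih, Function.iterate_succ_apply', hat, DD_rotate_one]

lemma take_DD (u : List Bool) : (DD u).take u.length = u := List.take_left' rfl

lemma ext_self {A : Type*} (n : ℕ) (hn : 1 ≤ n) (v : List A) (hv : v.length = 2 * n) :
    ext n v = v := by
  unfold ext
  rw [hv]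
  have h1 : (n + 2 * n - 1) / (2 * n) = 1 :=
    Nat.div_eq_of_lt_le (by omega) (by omega)
  rw [h1]
  simp

lemma rot_take {n : ℕ} (hn : 1 ≤ n) {u : List Bool} (hu : u.length = n) (i : ℕ) :
    (ext n ((DD u).rotate i)).take n = tau^[i] u := by
  have hne : u ≠ [] := by
    intro h; rw [h] at hu; simp at hu; omega
  rw [DD_rotate u hne i, ext_self n hn _ (by rw [length_DD, length_tau_iter, hu])]
  have := take_DD (tau^[i] u)
  rwa [length_tau_iter, hu] at this

lemma tau_mod {n : ℕ} (hn : 1 ≤ n) {u : List Bool} (hu : u.length = n) (i : ℕ) :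
    tau^[i] u = tau^[i % (2 * n)] u := by
  have h1 := rot_take hn hu i
  have h2 := rot_take hn hu (i % (2 * n))
  have h3 : (DD u).rotate (i % (2 * n)) = (DD u).rotate i := by
    have := List.rotate_mod (DD u) i
    rwa [length_DD, hu] at this
  rw [← h1, ← h2, h3]

lemma tau_add_period {n : ℕ} (hn : 1 ≤ n) {u : List Bool} (hu : u.length = n) (j : ℕ) :
    tau^[j + 2 * n] u = tau^[j] u := by
  rw [tau_mod hn hu (j + 2 * n), Nat.add_mod_right, ← tau_mod hn hu j]

theorem lexapp (u v x y : List Bool) (hl : u.length = v.length) (h : u < v) :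
    u ++ x < v ++ y := by
  show List.Lex (· < ·) (u ++ x) (v ++ y)
  have h' : List.Lex (· < ·) u v := h
  clear h
  induction u generalizing v with
  | nil =>
    cases v with
    | nil => cases h'
    | cons b t => simp at hl
  | cons a t ih =>
    cases v with
    | nil => simp at hl
    | cons b s =>
      cases h' with
      | rel hab => exact List.Lex.rel hab
      | cons h'' => exact List.Lex.cons (ih s (by simpa using hl) h'')

lemma DD_le_DD {u v : List Bool} (hl : u.length = v.length) (h : u ≤ v) : DD u ≤ DD v := by
  rcases lt_or_eq_of_le h with h' | rfl
  · exact le_of_lt (lexapp u v _ _ hl h')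
  · exact le_refl _

lemma le_of_DD_le {u v : List Bool} (hl : u.length = v.length) (h : DD u ≤ DD v) : u ≤ v := by
  by_contra hc
  exact absurd h (not_le.mpr (lexapp v u _ _ hl.symm (not_le.mp hc)))

lemma co_min {n : ℕ} (hn : 1 ≤ n) {α : List Bool} (hα : α.length = n)
    (hc : IsCoNecklace α) (r : ℕ) : α ≤ tau^[r] α := by
  have hne : α ≠ [] := by intro h; rw [h] at hα; simp at hα; omega
  have h1 : DD α ≤ (DD α).rotate r := hc r
  rw [DD_rotate α hne r] at h1
  exact le_of_DD_le (by rw [length_tau_iter]) h1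

/-- Existence of the minimal element of the orbit, and it's a co-necklace. -/
lemma exists_min {n : ℕ} (hn : 1 ≤ n) {u : List Bool} (hu : u.length = n) :
    ∃ α : List Bool, α.length = n ∧ IsCoNecklace α ∧ (∃ k < 2 * n, tau^[k] u = α) ∧
      ∀ j, α ≤ tau^[j] u := by
  classical
  set F : Finset (List Bool) := (Finset.range (2 * n)).image (fun i => tau^[i] u) with hF
  have hFne : F.Nonempty := ⟨u, Finset.mem_image.mpr ⟨0, Finset.mem_range.mpr (by omega), rfl⟩⟩
  set α := F.min' hFne with hαdef
  obtain ⟨k, hk, hkα'⟩ := Finset.mem_image.mp (F.min'_mem hFne)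
  have hkα : tau^[k] u = α := hkα'
  have hle : ∀ j, α ≤ tau^[j] u := by
    intro j
    refine F.min'_le _ (Finset.mem_image.mpr ⟨j % (2 * n), Finset.mem_range.mpr ?_, ?_⟩)
    · exact Nat.mod_lt _ (by omega)
    · exact (tau_mod hn hu j).symm
  have hαl : α.length = n := by rw [← hkα, length_tau_iter, hu]
  refine ⟨α, hαl, ?_, ⟨k, Finset.mem_range.mp hk, hkα⟩, hle⟩
  intro r
  have hne : α ≠ [] := by intro h; rw [h] at hαl; simp at hαl; omega
  show DD α ≤ (DD α).rotate r
  rw [DD_rotate α hne r]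
  refine DD_le_DD (by rw [length_tau_iter]) ?_
  have : tau^[r] α = tau^[r + k] u := by
    rw [Function.iterate_add_apply, hkα]
  rw [this]
  exact hle (r + k)

lemma mem_subN {n : ℕ} (hn : 1 ≤ n) {u : List Bool} (hu : u.length = n) {s : List Bool} :
    s ∈ subN n (DD u) ↔ ∃ i < 2 * n, tau^[i] u = s := by
  constructor
  · rintro ⟨i, hi, heq⟩
    rw [length_DD, hu] at hi
    rw [rot_take hn hu i] at heq
    exact ⟨i, hi, heq⟩
  · rintro ⟨i, hi, rfl⟩
    exact ⟨i, by rw [length_DD, hu]; exact hi, rot_take hn hu i⟩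

end CoNeck

open CoNeck
theorem stmt_13 (n : ℕ) (hn : 1 ≤ n) :
    (∀ α β : List Bool, α.length = n → β.length = n →
        IsCoNecklace α → IsCoNecklace β → α ≠ β →
        Disjoint (subN n (α ++ α.map (fun b => !b))) (subN n (β ++ β.map (fun b => !b)))) ∧
      (⋃ α ∈ {γ : List Bool | γ.length = n ∧ IsCoNecklace γ},
          subN n (α ++ α.map (fun b => !b))) =
        {w : List Bool | w.length = n} := by
  constructor
  · intro α β hαl hβl hcα hcβ hne
    rw [Set.disjoint_left]
    intro s hsα hsβ
    have hsα' : s ∈ subN n (DD α) := hsα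
    have hsβ' : s ∈ subN n (DD β) := hsβ
    obtain ⟨i, hi, hiα⟩ := (mem_subN hn hαl).mp hsα'
    obtain ⟨j, hj, hjβ⟩ := (mem_subN hn hβl).mp hsβ'
    -- β = tau^[(2n - j) + i] α
    have hβeq : β = tau^[(2 * n - j) + i] α := by
      rw [Function.iterate_add_apply, hiα, ← hjβ, ← Function.iterate_add_apply,
        show 2 * n - j + j = 0 + 2 * n by omega, tau_add_period hn hβl 0]
      rfl
    have hαeq : α = tau^[(2 * n - i) + j] β := by
      rw [Function.iterate_add_apply, hjβ, ← hiα, ← Function.iterate_add_apply,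
        show 2 * n - i + i = 0 + 2 * n by omega, tau_add_period hn hαl 0]
      rfl
    have h1 : α ≤ β := hβeq ▸ co_min hn hαl hcα _
    have h2 : β ≤ α := hαeq ▸ co_min hn hβl hcβ _
    exact hne (le_antisymm h1 h2)
  · ext w
    simp only [Set.mem_iUnion, Set.mem_setOf_eq]
    constructor
    · rintro ⟨α, ⟨⟨hαl, hcα⟩, hw⟩⟩
      have hw' : w ∈ subN n (DD α) := hw
      obtain ⟨i, hi, hiw⟩ := (mem_subN hn hαl).mp hw'
      rw [← hiw, length_tau_iter, hαl]
    · intro hw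
      obtain ⟨α, hαl, hcα, ⟨k, hk, hkα⟩, hle⟩ := exists_min hn hw
      refine ⟨α, ⟨⟨hαl, hcα⟩, ?_⟩⟩
      show w ∈ subN n (DD α)
      rw [mem_subN hn hαl]
      refine ⟨(2 * n - k) % (2 * n), Nat.mod_lt _ (by omega), ?_⟩
      rw [← tau_mod hn hαl, ← hkα, ← Function.iterate_add_apply,
        show 2 * n - k + k = 0 + 2 * n by omega, tau_add_period hn hw 0]
      rfl
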